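/- Let c ≠ 0, b > 0, and suppose F : ℝ → ℝ is differentiable with F'(r) = b * exp(c * F(r)) for all r ∈ ℝ. Then no such F defined on all of ℝ exists; i.e., there is no globally defined differentiable solution of F' = b e^{cF} on ℝ. -/
import Mathlib


theorem stmt_5 (c b : ℝ) (hc : c ≠ 0) (hb : 0 < b) :
    ¬ ∃ F : ℝ → ℝ, Differentiable ℝ F ∧ ∀ r : ℝ, deriv F r = b * Real.exp (c * F r) := by
  rintro ⟨F, hF, hderiv⟩
  -- Consider H r = exp (-c * F r) + c * b * r; its derivative is 0.
  set H : ℝ → ℝ := fun r => Real.exp (-c * F r) + c * b * r with hH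
  have hHderiv : ∀ r, HasDerivAt H 0 r := by
    intro r
    have h1 : HasDerivAt F (b * Real.exp (c * F r)) r := by
      have := (hF r).hasDerivAt
      rwa [hderiv r] at this
    have h2 : HasDerivAt (fun r => -c * F r) (-c * (b * Real.exp (c * F r))) r :=
      h1.const_mul (-c)
    have h3 : HasDerivAt (fun r => Real.exp (-c * F r))
        (Real.exp (-c * F r) * (-c * (b * Real.exp (c * F r)))) r := h2.exp
    have h4 : HasDerivAt (fun r : ℝ => c * b * r) (c * b) r := by
      simpa using (hasDerivAt_id r).const_mul (c * b)
    have h5 := h3.add h4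
    have key : Real.exp (-c * F r) * (-c * (b * Real.exp (c * F r))) + c * b = 0 := by
      have : Real.exp (-c * F r) * Real.exp (c * F r) = 1 := by
        rw [← Real.exp_add]; ring_nf; exact Real.exp_zero
      linear_combination (-c * b) * this
    rwa [key] at h5
  have hconst : ∀ r, H r = H 0 := by
    intro r
    exact is_const_of_deriv_eq_zero (fun x => (hHderiv x).differentiableAt)
      (fun x => (hHderiv x).deriv) r 0
  set r₀ : ℝ := Real.exp (-c * F 0) / (c * b) with hr₀
  have hcb : c * b ≠ 0 := mul_ne_zero hc (ne_of_gt hb)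
  have := hconst r₀
  simp only [hH] at this
  have : Real.exp (-c * F r₀) = 0 := by
    have h0 : c * b * r₀ = Real.exp (-c * F 0) := by
      rw [hr₀]; field_simp
    nlinarith [this, h0]
  exact (Real.exp_pos _).ne' this
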